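/- For every x ∈ S_4: |N(x) ∩ S| = |S| = 4, |N(x) ∩ T| = 0, |N(x) ∩ (S_0 \ (S ∪ T))| = ½|S_0 \ (S ∪ T)| = 2^{2ν−4} − 4, and |N(x) ∩ S_2| = ½|S_2| = 6·2^{2ν−4}. -/

import Mathlib

open Finset

abbrev F2 := ZMod 2

/-- Vectors in `F_2^{2ν}`, divided into `ν` blocks of length 2. -/
abbrev Vec (ν : ℕ) := Fin ν → Fin 2 → F2

/-- The symplectic form `x^T K y` with `K = I_ν ⊗ R`, `R = [[0,1],[1,0]]`. -/
def sform {ν : ℕ} (x y : Vec ν) : F2 := ∑ l, (x l 0 * y l 1 + x l 1 * y l 0)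

/-- The vertex set of the symplectic graph `Sp(2ν,2)`: nonzero vectors.
Vertices `x, y` are adjacent iff `sform x y = 1`. -/
abbrev Vtx (ν : ℕ) := {x : Vec ν // x ≠ 0}

/-- The weight of a length-2 block. -/
def wt (b : Fin 2 → F2) : ℕ := (univ.filter (fun c => b c ≠ 0)).card

/-- The number of blocks of `x` having weight `w`. -/
def nblk {ν : ℕ} (x : Vec ν) (w : ℕ) : ℕ := (univ.filter (fun l => wt (x l) = w)).card

/-- `x` belongs to the 4-subset `S = {v_1,v_2,v_3,v_4}`. -/
def inS {ν : ℕ} (v : Fin 4 → Vec ν) (x : Vec ν) : Prop := ∃ i, x = v i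

/-- `x` belongs to `T = {v_1+v_2, v_2+v_3, v_3+v_1}`. -/
def inT {ν : ℕ} (v : Fin 4 → Vec ν) (x : Vec ν) : Prop :=
  ∃ i j : Fin 4, i ≠ 3 ∧ j ≠ 3 ∧ i ≠ j ∧ x = v i + v j

/-- The number of indices `j ∈ [4]` with `x^T K v_j = 1`. -/
def cnt {ν : ℕ} (v : Fin 4 → Vec ν) (x : Vec ν) : ℕ :=
  (univ.filter (fun j : Fin 4 => sform x (v j) = 1)).card

instance {ν : ℕ} (v : Fin 4 → Vec ν) : DecidablePred (inS v) := fun _ =>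
  inferInstanceAs (Decidable (∃ _, _))

instance {ν : ℕ} (v : Fin 4 → Vec ν) : DecidablePred (inT v) := fun _ =>
  inferInstanceAs (Decidable (∃ _, _))

/-- The set `S` as a finset of vertices. -/
def Sfin {ν : ℕ} (v : Fin 4 → Vec ν) : Finset (Vtx ν) := univ.filter (fun x => inS v x.1)

/-- The set `T` as a finset of vertices. -/
def Tfin {ν : ℕ} (v : Fin 4 → Vec ν) : Finset (Vtx ν) := univ.filter (fun x => inT v x.1)

/-- The set `S_i` of vertices `x` with `#{j : x^T K v_j = 1} = i`, as a finset. -/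
def Sifin {ν : ℕ} (v : Fin 4 → Vec ν) (i : ℕ) : Finset (Vtx ν) :=
  univ.filter (fun x => cnt v x.1 = i)

/-- The set `S_0 \ (S ∪ T)` as a finset of vertices. -/
def S0'fin {ν : ℕ} (v : Fin 4 → Vec ν) : Finset (Vtx ν) :=
  univ.filter (fun x => cnt v x.1 = 0 ∧ ¬ inS v x.1 ∧ ¬ inT v x.1)

/-- The number of neighbors of the vertex `x` inside the finset `C`. -/
def nbc {ν : ℕ} (x : Vtx ν) (C : Finset (Vtx ν)) : ℕ :=
  (C.filter (fun y => sform x.1 y.1 = 1)).card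

/-- The standing hypotheses on the special 4-subset `S = {v_1,v_2,v_3,v_4}`:
all `v_i` are vertices, `v_1,v_2,v_3` are linearly independent and pairwise
(and self) `K`-orthogonal, and `v_4 = v_1 + v_2 + v_3`. -/
structure SConfig (ν : ℕ) (v : Fin 4 → Vec ν) : Prop where
  hne : ∀ i, v i ≠ 0
  hind : LinearIndependent F2 ![v 0, v 1, v 2]
  horth : ∀ i j : Fin 4, i ≠ 3 → j ≠ 3 → sform (v i) (v j) = 0
  hsum : v 3 = v 0 + v 1 + v 2

/-! The form `sform` is nondegenerate, and `x, v₁, v₂, v₃` are linearly independent: `x` pairs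
to `1` with `v₁`, whereas the span of `v₁, v₂, v₃` is totally isotropic. Hence
`y ↦ (⟨y, x⟩, ⟨y, v₁⟩, ⟨y, v₂⟩, ⟨y, v₃⟩)` is a linear surjection onto `F₂⁴`, all of whose fibres
have `2^{2ν-4}` elements. As `⟨y, v₄⟩ = ⟨y, v₁⟩ + ⟨y, v₂⟩ + ⟨y, v₃⟩`, both the index `i` with
`y ∈ S_i` and adjacency to `x` are read off from the image of `y`, so every count is a number of
patterns in `F₂⁴` (`1`, `2`, `6` or `12`) times `2^{2ν-4}`, corrected by the eight vectors
`{0} ∪ S ∪ T` of the span of `v₁, v₂, v₃`, which all lie in `S_0`. -/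

open Function

section FiberCounting

variable {G H F : Type*} [AddGroup G] [Fintype G] [AddMonoid H] [Fintype H] [DecidableEq H]
  [FunLike F G H] [AddMonoidHomClass F G H]

theorem card_filter_comp_of_surjective (f : F) (hf : Surjective f) (P : H → Prop)
    [DecidablePred P] : #{g | P (f g)} = #{t | P t} * #{g | f g = 0} := by
  rw [card_eq_sum_card_fiberwise (t := {t | P t}) (fun g hg => by simpa using hg)]
  refine sum_const_nat fun t ht => ?_
  rw [filter_filter, filter_congr (q := fun g => f g = t)
    fun g _ => ⟨And.right, fun h => ⟨by simpa [h] using ht, h⟩⟩]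
  exact AddMonoidHom.card_fiber_eq_of_mem_range f (hf t) (hf 0)

theorem card_eq_card_mul_card_fiber_of_surjective (f : F) (hf : Surjective f) :
    Fintype.card G = Fintype.card H * #{g | f g = 0} := by
  simpa using card_filter_comp_of_surjective f hf (fun _ => True)

end FiberCounting

theorem LinearMap.BilinForm.surjective_pi_flip_of_linearIndependent {K V ι : Type*} [Field K]
    [AddCommGroup V] [Module K V] [FiniteDimensional K V] [Fintype ι] [DecidableEq ι]
    {B : LinearMap.BilinForm K V} (hB : B.Nondegenerate) {u : ι → V}
    (hu : LinearIndependent K u) : Surjective (LinearMap.pi fun i => B.flip (u i)) := by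
  intro t
  obtain ⟨φ, hφ⟩ := LinearMap.dualMap_surjective_of_injective
    hu.fintypeLinearCombination_injective (Fintype.linearCombination K t)
  refine ⟨(B.toDual hB).symm φ, funext fun i => ?_⟩
  have h := LinearMap.congr_fun hφ (Pi.single i 1)
  rw [LinearMap.dualMap_apply, Fintype.linearCombination_apply_single, one_smul,
    Fintype.linearCombination_apply_single, smul_eq_mul, one_mul] at h
  simpa using h

section SymplecticForm

variable {ν : ℕ}

theorem sform_comm (x y : Vec ν) : sform x y = sform y x :=
  sum_congr rfl fun l _ => by ring

variable (ν) in
def sformBilin : LinearMap.BilinForm F2 (Vec ν) :=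
  LinearMap.mk₂ F2 sform
    (fun x y z => by
      simp only [sform, ← sum_add_distrib, Pi.add_apply]
      exact sum_congr rfl fun l _ => by ring)
    (fun c x y => by
      simp only [sform, mul_sum, Pi.smul_apply, smul_eq_mul]
      exact sum_congr rfl fun l _ => by ring)
    (fun x y z => by
      simp only [sform, ← sum_add_distrib, Pi.add_apply]
      exact sum_congr rfl fun l _ => by ring)
    (fun c x y => by
      simp only [sform, mul_sum, Pi.smul_apply, smul_eq_mul]
      exact sum_congr rfl fun l _ => by ring)

@[simp]
theorem sformBilin_apply (x y : Vec ν) : sformBilin ν x y = sform x y := rfl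

theorem sform_add_left (x y z : Vec ν) : sform (x + y) z = sform x z + sform y z :=
  LinearMap.map_add₂ (sformBilin ν) x y z

theorem sform_add_right (x y z : Vec ν) : sform x (y + z) = sform x y + sform x z :=
  map_add (sformBilin ν x) y z

theorem sform_smul_left (c : F2) (x y : Vec ν) : sform (c • x) y = c * sform x y :=
  LinearMap.map_smul₂ (sformBilin ν) c x y

theorem sform_zero_left (y : Vec ν) : sform 0 y = 0 :=
  LinearMap.map_zero₂ (sformBilin ν) y

theorem sformBilin_separatingLeft : (sformBilin ν).SeparatingLeft := by
  intro x hx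
  funext l c
  have h0 := hx (Pi.single l (Pi.single 1 1))
  have h1 := hx (Pi.single l (Pi.single 0 1))
  fin_cases c
  · simpa [sform, Pi.single_apply, apply_ite, ite_apply] using h0
  · simpa [sform, Pi.single_apply, apply_ite, ite_apply] using h1

theorem sformBilin_nondegenerate : (sformBilin ν).Nondegenerate :=
  ⟨sformBilin_separatingLeft, fun y hy =>
    sformBilin_separatingLeft y fun x => (sform_comm y x).trans (hy x)⟩

end SymplecticForm

section Evaluation

variable {ν k : ℕ}

def evalForms (u : Fin k → Vec ν) : Vec ν →ₗ[F2] (Fin k → F2) :=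
  LinearMap.pi fun i => (sformBilin ν).flip (u i)

@[simp]
theorem evalForms_apply (u : Fin k → Vec ν) (y : Vec ν) (i : Fin k) :
    evalForms u y i = sform y (u i) := rfl

theorem card_filter_evalForms {u : Fin k → Vec ν} (hu : LinearIndependent F2 u)
    (P : (Fin k → F2) → Prop) [DecidablePred P] :
    #{y | P (evalForms u y)} = #{t | P t} * 2 ^ (2 * ν - k) := by
  have hsurj : Surjective (evalForms u) :=
    LinearMap.BilinForm.surjective_pi_flip_of_linearIndependent sformBilin_nondegenerate hu
  have hcard := card_eq_card_mul_card_fiber_of_surjective (evalForms u) hsurj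
  simp only [Fintype.card_fun, ZMod.card, Fintype.card_fin, ← pow_mul] at hcard
  have hk : k ≤ 2 * ν := (Nat.pow_dvd_pow_iff_le_right (by norm_num)).1 ⟨_, hcard⟩
  have hfiber : #{y | evalForms u y = 0} = 2 ^ (2 * ν - k) := by
    refine Nat.eq_of_mul_eq_mul_left (pow_pos two_pos k) ?_
    rw [← hcard, ← pow_add, Nat.add_sub_cancel' hk]
  rw [card_filter_comp_of_surjective _ hsurj, hfiber]

end Evaluation

section Configuration

variable {ν : ℕ} {v : Fin 4 → Vec ν}

theorem evalForms_cons {k : ℕ} (x : Vec ν) (u : Fin k → Vec ν) (y : Vec ν) :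
    evalForms (Fin.cons x u) y = Fin.cons (sform y x) (evalForms u y) := by
  funext i
  cases i using Fin.cases <;> rfl

def lincomb (v : Fin 4 → Vec ν) : (Fin 3 → F2) →ₗ[F2] Vec ν :=
  Fintype.linearCombination F2 ![v 0, v 1, v 2]

def sCoeff : Fin 4 → Fin 3 → F2 := ![![1, 0, 0], ![0, 1, 0], ![0, 0, 1], ![1, 1, 1]]

theorem lincomb_sCoeff (hsum : v 3 = v 0 + v 1 + v 2) (i : Fin 4) :
    lincomb v (sCoeff i) = v i := by
  fin_cases i <;> simp [lincomb, sCoeff, Fintype.linearCombination_apply, Fin.sum_univ_three, hsum]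

theorem lincomb_injective (hv : SConfig ν v) : Injective (lincomb v) :=
  hv.hind.fintypeLinearCombination_injective

theorem SConfig.injective (hv : SConfig ν v) : Injective v := by
  have hs : Injective sCoeff := by decide
  rw [show v = lincomb v ∘ sCoeff from funext fun i => (lincomb_sCoeff hv.hsum i).symm]
  exact (lincomb_injective hv).comp hs

theorem coeff_trichotomy (c : Fin 3 → F2) :
    c = 0 ∨ (∃ i, c = sCoeff i) ∨
      ∃ i j : Fin 4, i ≠ 3 ∧ j ≠ 3 ∧ i ≠ j ∧ c = sCoeff i + sCoeff j := by
  revert c; decide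

theorem mem_range_lincomb_iff (hsum : v 3 = v 0 + v 1 + v 2) (y : Vec ν) :
    y ∈ Set.range (lincomb v) ↔ y = 0 ∨ inS v y ∨ inT v y := by
  constructor
  · rintro ⟨c, rfl⟩
    rcases coeff_trichotomy c with rfl | ⟨i, rfl⟩ | ⟨i, j, hi, hj, hij, rfl⟩
    · exact Or.inl (map_zero _)
    · exact Or.inr (Or.inl ⟨i, lincomb_sCoeff hsum i⟩)
    · refine Or.inr (Or.inr ⟨i, j, hi, hj, hij, ?_⟩)
      rw [map_add, lincomb_sCoeff hsum, lincomb_sCoeff hsum]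
  · rintro (rfl | ⟨i, rfl⟩ | ⟨i, j, -, -, -, rfl⟩)
    · exact ⟨0, map_zero _⟩
    · exact ⟨sCoeff i, lincomb_sCoeff hsum i⟩
    · exact ⟨sCoeff i + sCoeff j, by rw [map_add, lincomb_sCoeff hsum, lincomb_sCoeff hsum]⟩

theorem evalForms_lincomb (hv : SConfig ν v) (c : Fin 3 → F2) :
    evalForms ![v 0, v 1, v 2] (lincomb v c) = 0 := by
  funext i
  fin_cases i <;> simp [lincomb, Fintype.linearCombination_apply, Fin.sum_univ_three,
    sform_add_left, sform_smul_left, hv.horth]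

def cntPat (s : Fin 3 → F2) : ℕ := #{j : Fin 4 | ![s 0, s 1, s 2, s 0 + s 1 + s 2] j = 1}

theorem cnt_eq_cntPat (hsum : v 3 = v 0 + v 1 + v 2) (y : Vec ν) :
    cnt v y = cntPat (evalForms ![v 0, v 1, v 2] y) := by
  refine congrArg card (filter_congr fun j _ => ?_)
  fin_cases j <;> simp [hsum, sform_add_right]

theorem cnt_lincomb (hv : SConfig ν v) (c : Fin 3 → F2) : cnt v (lincomb v c) = 0 := by
  rw [cnt_eq_cntPat hv.hsum, evalForms_lincomb hv]
  rfl

theorem linearIndependent_cons_of_sform_eq_one (hv : SConfig ν v) {x : Vec ν}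
    (hx : sform x (v 0) = 1) :
    LinearIndependent F2 (Fin.cons x ![v 0, v 1, v 2] : Fin 4 → Vec ν) := by
  refine linearIndependent_finCons.2 ⟨hv.hind, fun hmem => ?_⟩
  obtain ⟨c, hc⟩ := (Submodule.mem_span_range_iff_exists_fun F2).1 hmem
  have h0 := congrFun (evalForms_lincomb hv c) 0
  simp [lincomb, Fintype.linearCombination_apply, hc, hx] at h0

end Configuration

section Counting

variable {ν : ℕ} {v : Fin 4 → Vec ν}

theorem card_filter_vtx (P : Vec ν → Prop) [DecidablePred P] :
    #{z : Vtx ν | P z.1} = #{y : Vec ν | y ≠ 0 ∧ P y} := by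
  rw [← card_map (Embedding.subtype _)]
  congr 1
  ext y
  simp [and_comm]

theorem ne_zero_of_sform_eq_one {y z : Vec ν} (h : sform y z = 1) : y ≠ 0 := by
  rintro rfl
  rw [sform_zero_left] at h
  exact zero_ne_one h

theorem sform_eq_one_of_mem_Sifin_four {x : Vtx ν} (hx : x ∈ Sifin v 4) (j : Fin 4) :
    sform x.1 (v j) = 1 := by
  have hcard : #{j | sform x.1 (v j) = 1} = #(univ : Finset (Fin 4)) := (mem_filter.1 hx).2
  exact card_filter_eq_iff.1 hcard j (mem_univ j)

theorem card_filter_cnt_sform (hv : SConfig ν v) {x : Vec ν} (hx : sform x (v 0) = 1)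
    (P : ℕ → F2 → Prop) [∀ n a, Decidable (P n a)] :
    #{y | P (cnt v y) (sform y x)} =
      #{t : Fin 4 → F2 | P (cntPat (Fin.tail t)) (t 0)} * 2 ^ (2 * ν - 4) := by
  rw [← card_filter_evalForms (linearIndependent_cons_of_sform_eq_one hv hx)]
  simp only [evalForms_cons, cnt_eq_cntPat hv.hsum, Fin.tail_cons, Fin.cons_zero]

end Counting

section Neighbourhoods

variable {ν : ℕ} {v : Fin 4 → Vec ν} {x : Vtx ν}

theorem nbc_Sfin (hx : x ∈ Sifin v 4) : nbc x (Sfin v) = (Sfin v).card := by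
  refine congrArg card (filter_true_of_mem fun z hz => ?_)
  obtain ⟨j, hj⟩ := (mem_filter.1 hz).2
  rw [hj]
  exact sform_eq_one_of_mem_Sifin_four hx j

theorem card_Sfin (hv : SConfig ν v) : (Sfin v).card = 4 := by
  rw [Sfin, card_filter_vtx, ← card_fin 4, ← card_image_of_injective univ hv.injective]
  refine congrArg card (Finset.ext fun y => ?_)
  simp only [mem_filter, mem_univ, true_and, mem_image]
  constructor
  · rintro ⟨-, j, rfl⟩
    exact ⟨j, rfl⟩
  · rintro ⟨j, -, rfl⟩
    exact ⟨hv.hne j, j, rfl⟩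

theorem nbc_Tfin (hx : x ∈ Sifin v 4) : nbc x (Tfin v) = 0 := by
  refine card_eq_zero.2 (filter_false_of_mem fun z hz => ?_)
  obtain ⟨i, j, -, -, -, hz⟩ := (mem_filter.1 hz).2
  rw [hz, sform_add_right, sform_eq_one_of_mem_Sifin_four hx,
    sform_eq_one_of_mem_Sifin_four hx]
  decide

theorem nbc_S0'fin (hv : SConfig ν v) (hx : x ∈ Sifin v 4) :
    nbc x (S0'fin v) = 2 ^ (2 * ν - 4) - 4 := by
  have hxv := sform_eq_one_of_mem_Sifin_four hx
  have hvx : ∀ j, sform (v j) x.1 = 1 := fun j => by rw [sform_comm, hxv]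
  have hset : univ.filter (fun y => y ≠ 0 ∧ (cnt v y = 0 ∧ ¬ inS v y ∧ ¬ inT v y) ∧
      sform x.1 y = 1) = univ.filter (fun y => cnt v y = 0 ∧ sform y x.1 = 1) \ univ.image v := by
    refine Finset.ext fun y => ?_
    simp only [mem_filter, mem_sdiff, mem_univ, true_and, mem_image, not_exists]
    constructor
    · rintro ⟨-, ⟨hc, hS, -⟩, hy⟩
      exact ⟨⟨hc, by rwa [sform_comm]⟩, fun j hj => hS ⟨j, hj.symm⟩⟩
    · rintro ⟨⟨hc, hy⟩, hS⟩
      refine ⟨?_, ⟨hc, fun ⟨j, hj⟩ => hS j hj.symm, ?_⟩, by rwa [sform_comm]⟩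
      · exact ne_zero_of_sform_eq_one hy
      · rintro ⟨i, j, -, -, -, rfl⟩
        rw [sform_add_left, hvx, hvx] at hy
        exact absurd hy (by decide)
  have hsub : univ.image v ⊆ univ.filter (fun y => cnt v y = 0 ∧ sform y x.1 = 1) := by
    intro y hy
    obtain ⟨j, -, rfl⟩ := mem_image.1 hy
    refine mem_filter.2 ⟨mem_univ _, ?_, hvx j⟩
    rw [← lincomb_sCoeff hv.hsum j]
    exact cnt_lincomb hv _
  rw [nbc, S0'fin, filter_filter,
    card_filter_vtx (fun y => (cnt v y = 0 ∧ ¬ inS v y ∧ ¬ inT v y) ∧ sform x.1 y = 1), hset,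
    card_sdiff_of_subset hsub, card_image_of_injective _ hv.injective,
    card_filter_cnt_sform hv (hxv 0) (fun n a => n = 0 ∧ a = 1)]
  rw [show #{t : Fin 4 → F2 | cntPat (Fin.tail t) = 0 ∧ t 0 = 1} = 1 by decide, one_mul,
    card_univ, Fintype.card_fin]

theorem card_S0'fin (hv : SConfig ν v) (hx : x ∈ Sifin v 4) :
    (S0'fin v).card = 2 * 2 ^ (2 * ν - 4) - 8 := by
  have hset : univ.filter (fun y => y ≠ 0 ∧ cnt v y = 0 ∧ ¬ inS v y ∧ ¬ inT v y) =
      univ.filter (fun y => cnt v y = 0) \ univ.image (lincomb v) := by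
    refine Finset.ext fun y => ?_
    simp only [mem_filter, mem_sdiff, mem_univ, true_and, mem_image, ← Set.mem_range,
      mem_range_lincomb_iff hv.hsum]
    tauto
  have hsub : univ.image (lincomb v) ⊆ univ.filter (fun y => cnt v y = 0) := by
    intro y hy
    obtain ⟨c, -, rfl⟩ := mem_image.1 hy
    exact mem_filter.2 ⟨mem_univ _, cnt_lincomb hv c⟩
  rw [S0'fin, card_filter_vtx (fun y => cnt v y = 0 ∧ ¬ inS v y ∧ ¬ inT v y), hset,
    card_sdiff_of_subset hsub, card_image_of_injective _ (lincomb_injective hv),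
    card_filter_cnt_sform hv (sform_eq_one_of_mem_Sifin_four hx 0) (fun n _ => n = 0),
    show #{t : Fin 4 → F2 | cntPat (Fin.tail t) = 0} = 2 by decide]
  rfl

theorem nbc_Sifin_two (hv : SConfig ν v) (hx : x ∈ Sifin v 4) :
    nbc x (Sifin v 2) = 6 * 2 ^ (2 * ν - 4) := by
  have hset : univ.filter (fun y => y ≠ 0 ∧ cnt v y = 2 ∧ sform x.1 y = 1) =
      univ.filter (fun y => cnt v y = 2 ∧ sform y x.1 = 1) := by
    refine filter_congr fun y _ => ?_
    rw [sform_comm]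
    exact ⟨fun h => h.2, fun h => ⟨ne_zero_of_sform_eq_one h.2, h⟩⟩
  rw [nbc, Sifin, filter_filter, card_filter_vtx (fun y => cnt v y = 2 ∧ sform x.1 y = 1), hset,
    card_filter_cnt_sform hv (sform_eq_one_of_mem_Sifin_four hx 0) (fun n a => n = 2 ∧ a = 1),
    show #{t : Fin 4 → F2 | cntPat (Fin.tail t) = 2 ∧ t 0 = 1} = 6 by decide]

theorem card_Sifin_two (hv : SConfig ν v) (hx : x ∈ Sifin v 4) :
    (Sifin v 2).card = 12 * 2 ^ (2 * ν - 4) := by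
  have hset :
      univ.filter (fun y => y ≠ 0 ∧ cnt v y = 2) = univ.filter (fun y => cnt v y = 2) := by
    refine filter_congr fun y _ => ⟨fun h => h.2, fun h => ⟨?_, h⟩⟩
    rintro rfl
    simp [cnt, sform_zero_left] at h
  rw [Sifin, card_filter_vtx (fun y => cnt v y = 2), hset,
    card_filter_cnt_sform hv (sform_eq_one_of_mem_Sifin_four hx 0) (fun n _ => n = 2),
    show #{t : Fin 4 → F2 | cntPat (Fin.tail t) = 2} = 12 by decide]

end Neighbourhoods

theorem nbrs_from_S4_general (ν : ℕ) (v : Fin 4 → Vec ν) (hv : SConfig ν v)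
    (x : Vtx ν) (hx : x ∈ Sifin v 4) :
    nbc x (Sfin v) = (Sfin v).card ∧ (Sfin v).card = 4 ∧
    nbc x (Tfin v) = 0 ∧
    nbc x (S0'fin v) = 2 ^ (2 * ν - 4) - 4 ∧
    2 * nbc x (S0'fin v) = (S0'fin v).card ∧
    nbc x (Sifin v 2) = 6 * 2 ^ (2 * ν - 4) ∧
    2 * nbc x (Sifin v 2) = (Sifin v 2).card := by
  refine ⟨nbc_Sfin hx, card_Sfin hv, nbc_Tfin hx, nbc_S0'fin hv hx, ?_, nbc_Sifin_two hv hx, ?_⟩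
  · rw [nbc_S0'fin hv hx, card_S0'fin hv hx]
    omega
  · rw [nbc_Sifin_two hv hx, card_Sifin_two hv hx]
    ring

/-- For every `x ∈ S_4`: `x` is adjacent to all of `S` (`|S| = 4`), to none of `T`,
to exactly half of `S_0 \ (S ∪ T)` (namely `2^{2ν-4} - 4` vertices), and to exactly
half of `S_2` (namely `6·2^{2ν-4}` vertices). -/
theorem nbrs_from_S4 (ν : ℕ) (hν : 3 ≤ ν) (v : Fin 4 → Vec ν) (hv : SConfig ν v)
    (x : Vtx ν) (hx : x ∈ Sifin v 4) :
    nbc x (Sfin v) = (Sfin v).card ∧ (Sfin v).card = 4 ∧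
    nbc x (Tfin v) = 0 ∧
    nbc x (S0'fin v) = 2 ^ (2 * ν - 4) - 4 ∧
    2 * nbc x (S0'fin v) = (S0'fin v).card ∧
    nbc x (Sifin v 2) = 6 * 2 ^ (2 * ν - 4) ∧
    2 * nbc x (Sifin v 2) = (Sifin v 2).card :=
  nbrs_from_S4_general ν v hv x hx
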